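/- arXiv:math/9810061 — 2 statements merged into one kernel-verified Lean document; each statement's English description precedes it below -/
import Mathlib

section
/- For any V ⊆ A₀, the dual V* equals the closure (in the topology of locally uniform convergence on the unit disk) of (cm V)^T, where (cm V)^T = { g analytic on a neighborhood of the closed unit disk, g(0)=1, with (f*g)(1) ≠ 0 for all f ∈ cm(V) }. -/
open Metric Set Filter

noncomputable def coeff (f : ℂ → ℂ) (k : ℕ) : ℂ := iteratedDeriv k f 0 / (k.factorial : ℂ)

noncomputable def hadamard (f g : ℂ → ℂ) : ℂ → ℂ := fun z => ∑' k : ℕ, coeff f k * coeff g k * z ^ k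

def Pt (x : ℂ) (f : ℂ → ℂ) : ℂ → ℂ := fun z => f (x * z)

def A0 : Set (ℂ → ℂ) := {f | AnalyticOnNhd ℂ f (ball (0:ℂ) 1) ∧ f 0 = 1}

def cm (V : Set (ℂ → ℂ)) : Set (ℂ → ℂ) := {h | ∃ f ∈ V, ∃ x : ℂ, ‖x‖ ≤ 1 ∧ h = Pt x f}

def dual (V : Set (ℂ → ℂ)) : Set (ℂ → ℂ) :=
  {g ∈ A0 | ∀ f ∈ V, ∀ z ∈ ball (0:ℂ) 1, hadamard f g z ≠ 0}

def eligible (g : ℂ → ℂ) : Prop := ∃ R > 1, AnalyticOnNhd ℂ g (ball (0:ℂ) R)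

def VT (V : Set (ℂ → ℂ)) : Set (ℂ → ℂ) :=
  {g | eligible g ∧ g 0 = 1 ∧ ∀ f ∈ V, hadamard f g 1 ≠ 0}

def perp (U : Set (ℂ → ℂ)) : Set (ℂ → ℂ) :=
  {h ∈ A0 | ∀ g ∈ U, hadamard g h 1 ≠ 0}

def lamSet (g : ℂ → ℂ) (V : Set (ℂ → ℂ)) : Set ℂ := (fun f => hadamard f g 1) '' V

def S (R : ℝ) : Set (Set ℂ) := {K | K ⊆ ball (0:ℂ) R ∧ IsCompact K}

noncomputable def closLU (R : ℝ) (U : Set (ℂ → ℂ)) : Set (ℂ → ℂ) :=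
  (UniformOnFun.toFun (S R)) '' closure ((UniformOnFun.ofFun (S R)) '' U)

/-!
For `g ∈ V*` the dilations `g (r ·)`, `0 < r < 1`, are analytic beyond the closed disk and lie in
`(cm V)^T`, since `(P_x f * g (r ·))(1) = (f * g)(x r)`; they converge to `g` locally uniformly as
`r → 1`. Conversely, let `g_i ∈ (cm V)^T` converge locally uniformly to `h` and let `f ∈ V`. The
functions `f * g_i` have no zeros in the disk, because `(f * g_i)(x) = (P_x f * g_i)(1)`, and by
Cauchy's estimates for the Taylor coefficients they converge locally uniformly to `f * h`. As
`(f * h)(0) = 1`, Hurwitz's theorem shows that `f * h` has no zeros either.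
-/

open scoped Topology

section Coefficients

variable {f g : ℂ → ℂ}

lemma coeff_zero (f : ℂ → ℂ) : coeff f 0 = f 0 := by
  simp [coeff]

lemma norm_coeff_le (hf : DifferentiableOn ℂ f (ball 0 1)) {s M : ℝ} (hs0 : 0 < s)
    (hs1 : s < 1) (hM : ∀ w ∈ sphere (0 : ℂ) s, ‖f w‖ ≤ M) (k : ℕ) :
    ‖coeff f k‖ ≤ M / s ^ k := by
  have hcl : DiffContOnCl ℂ f (ball 0 s) :=
    (hf.mono (by rw [closure_ball 0 hs0.ne']; exact closedBall_subset_ball hs1)).diffContOnCl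
  have hfact : (0 : ℝ) < k.factorial := by positivity
  rw [coeff, norm_div, Complex.norm_natCast, div_le_iff₀ hfact]
  calc ‖iteratedDeriv k f 0‖ ≤ k.factorial * M / s ^ k :=
        Complex.norm_iteratedDeriv_le_of_forall_mem_sphere_norm_le k hs0 hcl hM
    _ = M / s ^ k * k.factorial := by ring

lemma exists_norm_coeff_le (hf : DifferentiableOn ℂ f (ball 0 1)) {s : ℝ} (hs0 : 0 < s)
    (hs1 : s < 1) : ∃ M, ∀ k, ‖coeff f k‖ ≤ M / s ^ k := by
  obtain ⟨M, hM⟩ := (isCompact_sphere (0 : ℂ) s).exists_bound_of_continuousOn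
    (hf.continuousOn.mono (sphere_subset_closedBall.trans (closedBall_subset_ball hs1)))
  exact ⟨M, norm_coeff_le hf hs0 hs1 hM⟩

lemma coeff_sub (hf : AnalyticAt ℂ f 0) (hg : AnalyticAt ℂ g 0) (k : ℕ) :
    coeff (f - g) k = coeff f k - coeff g k := by
  rw [coeff, coeff, coeff, iteratedDeriv_sub hf.contDiffAt hg.contDiffAt, sub_div]

lemma coeff_Pt (hf : AnalyticOnNhd ℂ f (ball 0 1)) {x : ℂ} (hx : ‖x‖ ≤ 1) (k : ℕ) :
    coeff (Pt x f) k = x ^ k * coeff f k := by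
  have hmaps : MapsTo (x * ·) (ball (0 : ℂ) 1) (ball 0 1) := fun z hz => by
    rw [mem_ball_zero_iff] at hz ⊢
    rw [norm_mul]
    nlinarith [norm_nonneg x, norm_nonneg z]
  have h := iteratedDerivWithin_comp_const_smul (n := k) (mem_ball_self one_pos)
    isOpen_ball.uniqueDiffOn (hf.contDiffOn isOpen_ball.uniqueDiffOn) x hmaps
  rw [iteratedDerivWithin_of_isOpen isOpen_ball (mem_ball_self one_pos), mul_zero,
    iteratedDerivWithin_of_isOpen isOpen_ball (mem_ball_self one_pos)] at h
  unfold coeff Pt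
  rw [h, smul_eq_mul, mul_div_assoc]

lemma norm_mul_mul_pow_le {a b : ℕ → ℂ} {A B s ρ : ℝ} {z : ℂ} (hs : 0 < s)
    (ha : ∀ k, ‖a k‖ ≤ A / s ^ k) (hb : ∀ k, ‖b k‖ ≤ B / s ^ k) (hz : ‖z‖ ≤ ρ) (k : ℕ) :
    ‖a k * b k * z ^ k‖ ≤ A * B * (ρ / (s * s)) ^ k := by
  rw [norm_mul, norm_mul, norm_pow]
  calc ‖a k‖ * ‖b k‖ * ‖z‖ ^ k ≤ A / s ^ k * (B / s ^ k) * ρ ^ k := by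
        have hA : 0 ≤ A / s ^ k := (norm_nonneg _).trans (ha k)
        have hB : 0 ≤ B / s ^ k := (norm_nonneg _).trans (hb k)
        gcongr
        exacts [ha k, hb k]
    _ = A * B * (ρ / (s * s)) ^ k := by
        rw [div_pow, mul_pow]
        field_simp

end Coefficients

section Hadamard

variable {f g h : ℂ → ℂ}

lemma exists_lt_one_and_lt_mul_self {ρ : ℝ} (hρ0 : 0 ≤ ρ) (hρ1 : ρ < 1) :
    ∃ s : ℝ, 0 < s ∧ s < 1 ∧ ρ < s * s :=
  ⟨(1 + ρ) / 2, by linarith, by linarith, by nlinarith⟩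

lemma summable_hadamard (hf : DifferentiableOn ℂ f (ball 0 1))
    (hg : DifferentiableOn ℂ g (ball 0 1)) {z : ℂ} (hz : ‖z‖ < 1) :
    Summable fun k => coeff f k * coeff g k * z ^ k := by
  obtain ⟨s, hs0, hs1, hzs⟩ := exists_lt_one_and_lt_mul_self (norm_nonneg z) hz
  obtain ⟨A, hA⟩ := exists_norm_coeff_le hf hs0 hs1
  obtain ⟨B, hB⟩ := exists_norm_coeff_le hg hs0 hs1
  have hq1 : ‖z‖ / (s * s) < 1 := (div_lt_one (by positivity)).mpr hzs
  exact Summable.of_norm_bounded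
    ((summable_geometric_of_lt_one (by positivity) hq1).mul_left (A * B))
    (norm_mul_mul_pow_le hs0 hA hB le_rfl)

lemma norm_hadamard_le (hf : DifferentiableOn ℂ f (ball 0 1))
    (hg : DifferentiableOn ℂ g (ball 0 1)) {s ρ A B : ℝ} (hs0 : 0 < s) (hs1 : s < 1)
    (hρ : ρ < s * s) (hA : ∀ w ∈ sphere (0 : ℂ) s, ‖f w‖ ≤ A)
    (hB : ∀ w ∈ sphere (0 : ℂ) s, ‖g w‖ ≤ B) {z : ℂ} (hz : ‖z‖ ≤ ρ) :
    ‖hadamard f g z‖ ≤ A * B / (1 - ρ / (s * s)) := by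
  have hq0 : 0 ≤ ρ / (s * s) := div_nonneg ((norm_nonneg z).trans hz) (by positivity)
  have hq1 : ρ / (s * s) < 1 := (div_lt_one (by positivity)).mpr hρ
  rw [div_eq_mul_inv]
  exact tsum_of_norm_bounded ((hasSum_geometric_of_lt_one hq0 hq1).mul_left (A * B))
    (norm_mul_mul_pow_le hs0 (norm_coeff_le hf hs0 hs1 hA) (norm_coeff_le hg hs0 hs1 hB) hz)

lemma hadamard_sub_right (hf : DifferentiableOn ℂ f (ball 0 1))
    (hg : AnalyticOnNhd ℂ g (ball 0 1)) (hh : AnalyticOnNhd ℂ h (ball 0 1)) {z : ℂ}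
    (hz : ‖z‖ < 1) : hadamard f g z - hadamard f h z = hadamard f (g - h) z := by
  rw [hadamard, hadamard, hadamard, ← (summable_hadamard hf hg.differentiableOn hz).tsum_sub
    (summable_hadamard hf hh.differentiableOn hz)]
  refine tsum_congr fun k => ?_
  rw [coeff_sub (hg 0 (mem_ball_self one_pos)) (hh 0 (mem_ball_self one_pos))]
  ring

lemma hadamard_analyticOnNhd (hf : DifferentiableOn ℂ f (ball 0 1))
    (hg : DifferentiableOn ℂ g (ball 0 1)) : AnalyticOnNhd ℂ (hadamard f g) (ball 0 1) := by
  set p := FormalMultilinearSeries.ofScalars ℂ fun k => coeff f k * coeff g k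
  have hp : hadamard f g = p.sum := by
    funext z
    exact tsum_congr fun k => by
      rw [FormalMultilinearSeries.ofScalars_apply_eq, smul_eq_mul]
  have hrad : 1 ≤ p.radius := by
    refine ENNReal.le_of_forall_nnreal_lt fun r hr => p.le_radius_of_summable_norm ?_
    have hr1 : ‖(r : ℂ)‖ < 1 := by simpa using hr
    refine (summable_hadamard hf hg hr1).norm.congr fun k => ?_
    simp [p]
  rw [hp]
  refine p.analyticOnNhd.mono fun z hz => ?_
  have hz1 : ‖z‖ₑ < 1 := by
    rw [← ofReal_norm]
    exact ENNReal.ofReal_lt_one.mpr (mem_ball_zero_iff.mp hz)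
  simpa using hz1.trans_le hrad

lemma hadamard_zero (f g : ℂ → ℂ) : hadamard f g 0 = f 0 * g 0 := by
  rw [hadamard, tsum_eq_single 0 fun k hk => by rw [zero_pow hk, mul_zero]]
  simp [coeff_zero]

lemma hadamard_Pt_left (hf : AnalyticOnNhd ℂ f (ball 0 1)) {x : ℂ} (hx : ‖x‖ ≤ 1)
    (g : ℂ → ℂ) (z : ℂ) : hadamard (Pt x f) g z = hadamard f g (x * z) :=
  tsum_congr fun k => by rw [coeff_Pt hf hx, mul_pow]; ring

lemma hadamard_Pt_right (hg : AnalyticOnNhd ℂ g (ball 0 1)) {x : ℂ} (hx : ‖x‖ ≤ 1)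
    (f : ℂ → ℂ) (z : ℂ) : hadamard f (Pt x g) z = hadamard f g (x * z) :=
  tsum_congr fun k => by rw [coeff_Pt hg hx, mul_pow]; ring

end Hadamard

lemma le_norm_of_forall_mem_sphere_le_norm {F : ℂ → ℂ} {c : ℂ} {r m : ℝ} (hr : 0 < r)
    (hm : 0 < m) (hF : DifferentiableOn ℂ F (closedBall c r))
    (hF0 : ∀ z ∈ closedBall c r, F z ≠ 0) (hFm : ∀ z ∈ sphere c r, m ≤ ‖F z‖) :
    m ≤ ‖F c‖ := by
  have hinv : DiffContOnCl ℂ (fun z => (F z)⁻¹) (ball c r) :=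
    DifferentiableOn.diffContOnCl (by rw [closure_ball c hr.ne']; exact hF.inv hF0)
  have hbound : ‖(F c)⁻¹‖ ≤ m⁻¹ := by
    refine Complex.norm_le_of_forall_mem_frontier_norm_le isBounded_ball hinv (fun z hz => ?_)
      (subset_closure (mem_ball_self hr))
    rw [frontier_ball c hr.ne'] at hz
    rw [norm_inv]
    exact inv_anti₀ hm (hFm z hz)
  rw [norm_inv] at hbound
  exact (inv_le_inv₀ (norm_pos_iff.mpr (hF0 c (mem_closedBall_self hr.le))) hm).mp hbound

lemma exists_sphere_subset_of_eventually_ne_zero {H : ℂ → ℂ} {U : Set ℂ} {z₀ : ℂ}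
    (hU : U ∈ 𝓝 z₀) (hH : ∀ᶠ z in 𝓝[≠] z₀, H z ≠ 0) :
    ∃ r > 0, closedBall z₀ r ⊆ U ∧ ∀ z ∈ sphere z₀ r, H z ≠ 0 := by
  obtain ⟨ε, hε, hεH⟩ := Metric.eventually_nhds_iff_ball.mp (eventually_nhdsWithin_iff.mp hH)
  obtain ⟨δ, hδ, hδU⟩ := Metric.mem_nhds_iff.mp hU
  have hrε : min ε δ / 2 < ε := by linarith [min_le_left ε δ, lt_min hε hδ]
  have hrδ : min ε δ / 2 < δ := by linarith [min_le_right ε δ, lt_min hε hδ]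
  refine ⟨min ε δ / 2, by positivity, (closedBall_subset_ball hrδ).trans hδU, fun z hz => ?_⟩
  refine hεH z (by rwa [mem_ball, mem_sphere.mp hz]) fun hzz => ?_
  rw [mem_singleton_iff.mp hzz, mem_sphere, dist_self] at hz
  linarith [lt_min hε hδ]

theorem hurwitz_ne_zero {ι : Type*} {l : Filter ι} [l.NeBot] {F : ι → ℂ → ℂ} {H : ℂ → ℂ}
    {U : Set ℂ} (hU : IsOpen U) (hUc : IsPreconnected U)
    (hF : ∀ᶠ i in l, DifferentiableOn ℂ (F i) U ∧ ∀ z ∈ U, F i z ≠ 0)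
    (hlim : TendstoLocallyUniformlyOn F H l U) {w : ℂ} (hw : w ∈ U) (hHw : H w ≠ 0)
    {z₀ : ℂ} (hz₀ : z₀ ∈ U) : H z₀ ≠ 0 := by
  intro hHz₀
  have hH : AnalyticOnNhd ℂ H U :=
    (hlim.differentiableOn (hF.mono fun _ hi => hi.1) hU).analyticOnNhd hU
  have hisol : ∀ᶠ z in 𝓝[≠] z₀, H z ≠ 0 :=
    (hH z₀ hz₀).eventually_eq_zero_or_eventually_ne_zero.resolve_left fun hzero =>
      hHw (hH.eqOn_zero_of_preconnected_of_eventuallyEq_zero hUc hz₀ hzero hw)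
  obtain ⟨r, hr, hrU, hrH⟩ := exists_sphere_subset_of_eventually_ne_zero (hU.mem_nhds hz₀) hisol
  obtain ⟨w₀, hw₀, hmin⟩ := (isCompact_sphere z₀ r).exists_isMinOn
    (NormedSpace.sphere_nonempty.mpr hr.le)
    (hH.continuousOn.mono (sphere_subset_closedBall.trans hrU)).norm
  set m := ‖H w₀‖
  have hm : 0 < m := norm_pos_iff.mpr (hrH w₀ hw₀)
  have hunif := Metric.tendstoUniformlyOn_iff.mp
    ((tendstoLocallyUniformlyOn_iff_forall_isCompact hU).mp hlim _ hrU
      (isCompact_closedBall z₀ r)) (m / 2) (half_pos hm)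
  obtain ⟨i, ⟨hFi, hFi0⟩, hclose⟩ := (hF.and hunif).exists
  have hsphere : ∀ z ∈ sphere z₀ r, m / 2 ≤ ‖F i z‖ := fun z hz => by
    have h1 := hclose z (sphere_subset_closedBall hz)
    have h2 : m ≤ ‖H z‖ := hmin hz
    rw [dist_eq_norm] at h1
    linarith [norm_sub_norm_le (H z) (F i z)]
  have hcentre := le_norm_of_forall_mem_sphere_le_norm hr (half_pos hm) (hFi.mono hrU)
    (fun z hz => hFi0 z (hrU hz)) hsphere
  have := hclose z₀ (mem_closedBall_self hr.le)
  rw [hHz₀, dist_zero_left] at this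
  linarith

lemma tendsto_ofFun_S_iff {R : ℝ} {ι : Type*} {l : Filter ι} {F : ι → ℂ → ℂ} {f : ℂ → ℂ} :
    Tendsto (fun i => UniformOnFun.ofFun (S R) (F i)) l (𝓝 (UniformOnFun.ofFun (S R) f)) ↔
      TendstoLocallyUniformlyOn F f l (ball 0 R) := by
  rw [UniformOnFun.tendsto_iff_tendstoUniformlyOn,
    tendstoLocallyUniformlyOn_iff_forall_isCompact isOpen_ball]
  exact ⟨fun h K hK hKc => h K ⟨hK, hKc⟩, fun h K hK => h K hK.1 hK.2⟩

lemma mem_closLU_iff {R : ℝ} {U : Set (ℂ → ℂ)} {g : ℂ → ℂ} :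
    g ∈ closLU R U ↔ ∃ (ι : Type) (l : Filter ι) (F : ι → ℂ → ℂ),
      l.NeBot ∧ (∀ᶠ i in l, F i ∈ U) ∧ TendstoLocallyUniformlyOn F g l (ball 0 R) := by
  have hmem : g ∈ closLU R U ↔
      UniformOnFun.ofFun (S R) g ∈ closure (UniformOnFun.ofFun (S R) '' U) :=
    ⟨fun ⟨u, hu, hug⟩ => hug ▸ hu, fun hg => ⟨_, hg, rfl⟩⟩
  rw [hmem]
  constructor
  · intro hg
    refine ⟨_, _, UniformOnFun.toFun (S R), mem_closure_iff_nhdsWithin_neBot.mp hg, ?_,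
      tendsto_ofFun_S_iff.mp (tendsto_id.mono_left nhdsWithin_le_nhds)⟩
    filter_upwards [self_mem_nhdsWithin] with u ⟨v, hv, hvu⟩
    exact hvu ▸ hv
  · rintro ⟨ι, l, F, hl, hFU, hlim⟩
    exact mem_closure_of_tendsto (tendsto_ofFun_S_iff.mpr hlim)
      (hFU.mono fun i hi => mem_image_of_mem _ hi)

lemma tendstoLocallyUniformlyOn_Pt {g : ℂ → ℂ} (hg : ContinuousOn g (ball 0 1)) :
    TendstoLocallyUniformlyOn (fun r : ℝ => Pt r g) g (𝓝[<] 1) (ball 0 1) := by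
  rw [tendstoLocallyUniformlyOn_iff_forall_isCompact isOpen_ball]
  intro K hK hKc
  have hcont : ContinuousOn (Function.uncurry fun (r : ℝ) => Pt r g) (Icc 0 1 ×ˢ K) := by
    refine hg.comp (by fun_prop) fun p hp => ?_
    have hz := mem_ball_zero_iff.mp (hK hp.2)
    rw [mem_ball_zero_iff, norm_mul, Complex.norm_real, Real.norm_of_nonneg hp.1.1]
    nlinarith [hp.1.2, norm_nonneg p.2]
  rw [Metric.tendstoUniformlyOn_iff]
  intro ε hε
  obtain ⟨v, hv, hvK⟩ := hKc.mem_uniformity_of_prod hcont (right_mem_Icc.mpr zero_le_one)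
    (Metric.dist_mem_uniformity hε)
  filter_upwards [nhdsWithin_le_of_mem (Icc_mem_nhdsLT zero_lt_one) hv] with r hr z hz
  simpa [Pt, dist_comm] using hvK r hr z hz

lemma TendstoLocallyUniformlyOn.hadamard_left {ι : Type*} {l : Filter ι} {F : ι → ℂ → ℂ}
    {f h : ℂ → ℂ} (hf : DifferentiableOn ℂ f (ball 0 1))
    (hF : ∀ᶠ i in l, AnalyticOnNhd ℂ (F i) (ball 0 1)) (hh : AnalyticOnNhd ℂ h (ball 0 1))
    (hlim : TendstoLocallyUniformlyOn F h l (ball 0 1)) :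
    TendstoLocallyUniformlyOn (fun i => hadamard f (F i)) (hadamard f h) l (ball 0 1) := by
  rw [tendstoLocallyUniformlyOn_iff_forall_isCompact isOpen_ball] at hlim ⊢
  intro K hK hKc
  obtain ⟨ρ', hρ'1, hKρ'⟩ := exists_lt_subset_ball hKc.isClosed hK
  set ρ := max ρ' 0
  have hKρ : ∀ z ∈ K, ‖z‖ ≤ ρ := fun z hz =>
    (mem_ball_zero_iff.mp (hKρ' hz)).le.trans (le_max_left _ _)
  obtain ⟨s, hs0, hs1, hρs⟩ := exists_lt_one_and_lt_mul_self (le_max_right _ _)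
    (max_lt hρ'1 one_pos)
  obtain ⟨A, hA⟩ := (isCompact_sphere (0 : ℂ) s).exists_bound_of_continuousOn
    (hf.continuousOn.mono (sphere_subset_closedBall.trans (closedBall_subset_ball hs1)))
  have hA0 : 0 ≤ A := (norm_nonneg _).trans (hA s (by simp [hs0.le]))
  have hq : 0 < 1 - ρ / (s * s) := sub_pos.mpr ((div_lt_one (by positivity)).mpr hρs)
  set C := A / (1 - ρ / (s * s))
  have hC : 0 ≤ C := div_nonneg hA0 hq.le
  rw [Metric.tendstoUniformlyOn_iff]
  intro ε hε
  have hclose := Metric.tendstoUniformlyOn_iff.mp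
    (hlim _ (closedBall_subset_ball hs1) (isCompact_closedBall 0 s)) (ε / (C + 1)) (by positivity)
  filter_upwards [hclose, hF] with i hi hFi z hz
  have hz1 : ‖z‖ < 1 := mem_ball_zero_iff.mp (hK hz)
  rw [dist_comm, dist_eq_norm, hadamard_sub_right hf hFi hh hz1]
  calc ‖hadamard f (F i - h) z‖ ≤ A * (ε / (C + 1)) / (1 - ρ / (s * s)) := by
        refine norm_hadamard_le hf (hFi.sub hh).differentiableOn hs0 hs1 hρs hA
          (fun w hw => ?_) (hKρ z hz)
        rw [Pi.sub_apply, ← dist_eq_norm, dist_comm]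
        exact (hi w (sphere_subset_closedBall hw)).le
    _ = C * (ε / (C + 1)) := by ring
    _ < ε := by
        rw [mul_div_assoc', div_lt_iff₀ (by positivity)]
        nlinarith

lemma Pt_mem_VT_cm {V : Set (ℂ → ℂ)} (hV : V ⊆ A0) {g : ℂ → ℂ} (hg : g ∈ dual V) {r : ℝ}
    (hr0 : 0 < r) (hr1 : r < 1) : Pt r g ∈ VT (cm V) := by
  obtain ⟨⟨hg_an, hg0⟩, hg_ne⟩ := hg
  have hr : ‖(r : ℂ)‖ = r := by rw [Complex.norm_real, Real.norm_of_nonneg hr0.le]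
  refine ⟨⟨1 / r, (one_lt_div hr0).mpr hr1, fun z hz => ?_⟩, by simp [Pt, hg0], ?_⟩
  · refine (hg_an _ ?_).comp (analyticAt_const.mul analyticAt_id)
    rw [mem_ball_zero_iff] at hz ⊢
    rw [norm_mul, hr]
    calc r * ‖z‖ < r * (1 / r) := mul_lt_mul_of_pos_left hz hr0
      _ = 1 := by field_simp
  · rintro _ ⟨f, hf, x, hx, rfl⟩
    rw [hadamard_Pt_left (hV hf).1 hx, hadamard_Pt_right hg_an (hr.trans_lt hr1).le]
    refine hg_ne f hf _ (mem_ball_zero_iff.mpr ?_)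
    rw [mul_one, norm_mul, hr]
    nlinarith [norm_nonneg x]

lemma dual_subset_closLU {V : Set (ℂ → ℂ)} (hV : V ⊆ A0) : dual V ⊆ closLU 1 (VT (cm V)) :=
  fun g hg => mem_closLU_iff.mpr ⟨ℝ, 𝓝[<] 1, fun r => Pt r g, inferInstance,
    mem_of_superset (Ioo_mem_nhdsLT zero_lt_one) fun _ hr => Pt_mem_VT_cm hV hg hr.1 hr.2,
    tendstoLocallyUniformlyOn_Pt hg.1.1.continuousOn⟩

lemma closLU_subset_dual {V : Set (ℂ → ℂ)} (hV : V ⊆ A0) : closLU 1 (VT (cm V)) ⊆ dual V := by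
  intro h hh
  obtain ⟨ι, l, F, hl, hFV, hlim⟩ := mem_closLU_iff.mp hh
  have hF : ∀ᶠ i in l, AnalyticOnNhd ℂ (F i) (ball 0 1) := hFV.mono
    fun i ⟨⟨R, hR, hFR⟩, _⟩ => hFR.mono (ball_subset_ball hR.le)
  have hh_an : AnalyticOnNhd ℂ h (ball 0 1) :=
    (hlim.differentiableOn (hF.mono fun _ hi => hi.differentiableOn) isOpen_ball).analyticOnNhd
      isOpen_ball
  have hh0 : h 0 = 1 := tendsto_nhds_unique (hlim.tendsto_at (mem_ball_self one_pos))
    (tendsto_const_nhds.congr' (hFV.mono fun _ hi => hi.2.1.symm))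
  refine ⟨⟨hh_an, hh0⟩, fun f hf z hz => ?_⟩
  have hf_diff := (hV hf).1.differentiableOn
  refine hurwitz_ne_zero isOpen_ball (convex_ball 0 1).isPreconnected ?_
    (hlim.hadamard_left hf_diff hF hh_an) (mem_ball_self one_pos) ?_ hz
  · filter_upwards [hFV, hF] with i hi hFi
    refine ⟨(hadamard_analyticOnNhd hf_diff hFi.differentiableOn).differentiableOn,
      fun x hx => ?_⟩
    have hx1 := (mem_ball_zero_iff.mp hx).le
    simpa [hadamard_Pt_left (hV hf).1 hx1] using hi.2.2 _ ⟨f, hf, x, hx1, rfl⟩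
  · simp [hadamard_zero, (hV hf).2, hh0]

theorem stmt10 (V : Set (ℂ → ℂ)) (hV : V ⊆ A0) :
    dual V = closLU 1 (VT (cm V)) :=
  (dual_subset_closLU hV).antisymm (closLU_subset_dual hV)
end

section
/- If V ⊆ A₀ is compact, then bor(V)* = V*, i.e., the border of V has the same dual as V. -/
open Metric Set Filter
open scoped Topology UniformConvergence

def bor (V : Set (ℂ → ℂ)) : Set (ℂ → ℂ) :=
  {f ∈ V | (V = {fun _ => (1:ℂ)}) ∨ ∀ g ∈ V, ∀ x : ℂ, ‖x‖ ≤ 1 → f = Pt x g → ‖x‖ = 1}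

/-! ### Auxiliary lemmas -/

open scoped Real

/-- The Taylor coefficient at 0 agrees with the power series coefficient. -/
lemma coeff_eq_psCoeff {f : ℂ → ℂ} {p : FormalMultilinearSeries ℂ ℂ ℂ}
    (h : HasFPowerSeriesAt f p 0) (k : ℕ) : coeff f k = p.coeff k := by
  obtain ⟨r, hr⟩ := h
  have h1 : (k.factorial : ℕ) • (p k fun _ => (1:ℂ)) = iteratedFDeriv ℂ k f 0 fun _ => 1 :=
    hr.factorial_smul (1:ℂ) k
  have h2 : iteratedDeriv k f 0 = iteratedFDeriv ℂ k f 0 fun _ : Fin k => 1 :=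
    iteratedDeriv_eq_iteratedFDeriv
  have h3 : (p k fun _ => (1:ℂ)) = p.coeff k := by
    rw [FormalMultilinearSeries.apply_eq_pow_smul_coeff]; simp
  have hk : (k.factorial : ℂ) ≠ 0 := Nat.cast_ne_zero.mpr k.factorial_ne_zero
  rw [coeff, h2, ← h1, h3, nsmul_eq_mul]
  field_simp

/-- Coefficients of a dilated function. -/
lemma coeff_Pt_s19 {g : ℂ → ℂ} (hg : AnalyticAt ℂ g 0) (y : ℂ) (k : ℕ) :
    coeff (Pt y g) k = y ^ k * coeff g k := by
  obtain ⟨q, hq⟩ := hg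
  have hsum := hasFPowerSeriesAt_iff.1 hq
  have hmap : Tendsto (fun z : ℂ => y * z) (𝓝 0) (𝓝 0) := by
    have : Tendsto (fun z : ℂ => y * z) (𝓝 0) (𝓝 (y * 0)) :=
      (continuous_const.mul continuous_id).tendsto 0
    simpa using this
  have hsum2 : ∀ᶠ z : ℂ in 𝓝 0,
      HasSum (fun n => z ^ n • ((FormalMultilinearSeries.ofScalars ℂ
        fun n => y ^ n * q.coeff n).coeff n)) (Pt y g (0 + z)) := by
    filter_upwards [hmap.eventually hsum] with z hz
    have hcoe : ∀ n, (FormalMultilinearSeries.ofScalars ℂ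
        (fun n => y ^ n * q.coeff n)).coeff n = y ^ n * q.coeff n := by
      intro n
      show (FormalMultilinearSeries.ofScalars ℂ (fun n => y ^ n * q.coeff n)) n
          (fun _ => (1:ℂ)) = _
      rw [FormalMultilinearSeries.ofScalars_apply_eq]
      simp
    have : HasSum (fun n => (y * z) ^ n • q.coeff n) (g (0 + y * z)) := hz
    convert this using 1
    · funext n
      rw [hcoe n]
      simp only [smul_eq_mul, mul_pow]
      ring
    · simp [Pt]
  have hP : HasFPowerSeriesAt (Pt y g)
      (FormalMultilinearSeries.ofScalars ℂ fun n => y ^ n * q.coeff n) 0 :=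
    hasFPowerSeriesAt_iff.2 hsum2
  rw [coeff_eq_psCoeff hP, coeff_eq_psCoeff hq]
  show (FormalMultilinearSeries.ofScalars ℂ (fun n => y ^ n * q.coeff n)) k
      (fun _ => (1:ℂ)) = _
  rw [FormalMultilinearSeries.ofScalars_apply_eq]
  simp

/-- Cauchy estimate for the difference of coefficients. -/
lemma coeff_sub_bound {u v : ℂ → ℂ}
    (hu : DifferentiableOn ℂ u (closedBall (0:ℂ) (1/2)))
    (hv : DifferentiableOn ℂ v (closedBall (0:ℂ) (1/2)))
    {C : ℝ}
    (hC : ∀ w ∈ sphere (0:ℂ) (1/2), ‖u w - v w‖ ≤ C) (k : ℕ) :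
    ‖coeff u k - coeff v k‖ ≤ C * 2 ^ k := by
  have hhalf : ((1/2 : NNReal) : ℝ) = (1/2 : ℝ) := by norm_num
  have hu' : DifferentiableOn ℂ u (closedBall (0:ℂ) ((1/2 : NNReal) : ℝ)) := by
    rw [hhalf]; exact hu
  have hv' : DifferentiableOn ℂ v (closedBall (0:ℂ) ((1/2 : NNReal) : ℝ)) := by
    rw [hhalf]; exact hv
  have hd : DifferentiableOn ℂ (fun w => u w - v w)
      (closedBall (0:ℂ) ((1/2 : NNReal) : ℝ)) := hu'.sub hv'
  have hpos : (0 : NNReal) < 1/2 := by norm_num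
  have hOB := hd.hasFPowerSeriesOnBall hpos
  have hOBu := hu'.hasFPowerSeriesOnBall hpos
  have hOBv := hv'.hasFPowerSeriesOnBall hpos
  have hAt : HasFPowerSeriesAt (fun w => u w - v w)
      (cauchyPowerSeries u 0 ((1/2 : NNReal) : ℝ) - cauchyPowerSeries v 0 ((1/2 : NNReal) : ℝ)) 0 :=
    hOBu.hasFPowerSeriesAt.sub hOBv.hasFPowerSeriesAt
  have h1 : coeff u k - coeff v k = coeff (fun w => u w - v w) k := by
    rw [coeff_eq_psCoeff hOBu.hasFPowerSeriesAt, coeff_eq_psCoeff hOBv.hasFPowerSeriesAt,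
      coeff_eq_psCoeff hAt]
    show _ = (cauchyPowerSeries u 0 ((1/2 : NNReal) : ℝ)
      - cauchyPowerSeries v 0 ((1/2 : NNReal) : ℝ)) k 1
    rw [FormalMultilinearSeries.coeff, FormalMultilinearSeries.coeff]
    exact (ContinuousMultilinearMap.sub_apply _ _ _).symm
  rw [h1, coeff_eq_psCoeff hOB.hasFPowerSeriesAt]
  set p := cauchyPowerSeries (fun w => u w - v w) 0 ((1/2 : NNReal) : ℝ) with hp
  have h2 : ‖p.coeff k‖ ≤ ‖p k‖ := by
    have h := (p k).le_opNorm (fun _ => (1:ℂ))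
    simp only [norm_one, Finset.prod_const_one, mul_one] at h
    exact h
  have hC0 : 0 ≤ C :=
    le_trans (norm_nonneg _) (hC _ (circleMap_mem_sphere 0 (by norm_num) 0))
  have h3 := norm_cauchyPowerSeries_le (fun w => u w - v w) 0 ((1/2 : NNReal) : ℝ) k
  set I := ∫ θ : ℝ in (0)..2 * π, ‖u (circleMap 0 ((1/2 : NNReal) : ℝ) θ)
    - v (circleMap 0 ((1/2 : NNReal) : ℝ) θ)‖ with hI
  have hint : I ≤ C * (2 * π) := by
    have hb : ‖I‖ ≤ C * |2 * π - 0| := by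
      apply intervalIntegral.norm_integral_le_of_norm_le_const
      intro θ _
      rw [norm_norm]
      apply hC
      rw [hhalf]
      exact circleMap_mem_sphere 0 (by norm_num) θ
    have : |2 * π - 0| = 2 * π := by
      rw [sub_zero, abs_of_nonneg (by positivity)]
    rw [this] at hb
    calc I ≤ ‖I‖ := le_abs_self I
      _ ≤ C * (2 * π) := hb
  have h4 : |((1/2 : NNReal) : ℝ)|⁻¹ = 2 := by
    rw [hhalf, abs_of_nonneg (by norm_num : (0:ℝ) ≤ 1/2)]
    norm_num
  have h2pi : (0:ℝ) < 2 * π := by positivity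
  calc ‖p.coeff k‖ ≤ ‖p k‖ := h2
    _ ≤ ((2 * π)⁻¹ * I) * |((1/2 : NNReal) : ℝ)|⁻¹ ^ k := h3
    _ ≤ C * 2 ^ k := by
        rw [h4]
        apply mul_le_mul_of_nonneg_right _ (by positivity)
        have h5 : (2 * π)⁻¹ * I ≤ (2 * π)⁻¹ * (C * (2 * π)) :=
          mul_le_mul_of_nonneg_left hint (by positivity)
        calc (2 * π)⁻¹ * I ≤ (2 * π)⁻¹ * (C * (2 * π)) := h5
          _ = C := by field_simp

/-- Continuity of the coefficient functionals on a set of normalized analytic functions. -/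
lemma coeff_continuousOn (V : Set (ℂ → ℂ)) (hV : V ⊆ A0) (k : ℕ) :
    ContinuousOn (fun u : ℂ →ᵤ[S 1] ℂ => coeff ((UniformOnFun.toFun (S 1)) u) k)
      ((UniformOnFun.ofFun (S 1)) '' V) := by
  intro u₀ hu₀
  have hK : sphere (0:ℂ) (1/2) ∈ S 1 := by
    constructor
    · intro w hw
      rw [mem_sphere_iff_norm, sub_zero] at hw
      rw [mem_ball_zero_iff, hw]; norm_num
    · exact isCompact_sphere _ _
  have htu : Tendsto (id : (ℂ →ᵤ[S 1] ℂ) → (ℂ →ᵤ[S 1] ℂ))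
      (𝓝[((UniformOnFun.ofFun (S 1)) '' V)] u₀) (𝓝 u₀) :=
    tendsto_id.mono_left nhdsWithin_le_nhds
  have hTU : TendstoUniformlyOn ((UniformOnFun.toFun (S 1)) ∘ id)
      ((UniformOnFun.toFun (S 1)) u₀)
      (𝓝[((UniformOnFun.ofFun (S 1)) '' V)] u₀) (sphere (0:ℂ) (1/2)) :=
    (UniformOnFun.tendsto_iff_tendstoUniformlyOn.1 htu) _ hK
  rw [ContinuousWithinAt, Metric.tendsto_nhds]
  intro ε hε
  have hδ : 0 < ε / (2 * 2 ^ k) := by positivity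
  filter_upwards [Metric.tendstoUniformlyOn_iff.1 hTU _ hδ, self_mem_nhdsWithin] with u hu huC
  rw [dist_eq_norm]
  obtain ⟨g, hgV, rfl⟩ := huC
  obtain ⟨g₀, hg₀V, rfl⟩ := hu₀
  have hball : closedBall (0:ℂ) (1/2) ⊆ ball (0:ℂ) 1 := closedBall_subset_ball (by norm_num)
  have hgd : DifferentiableOn ℂ g (closedBall (0:ℂ) (1/2)) :=
    ((hV hgV).1.differentiableOn).mono hball
  have hg₀d : DifferentiableOn ℂ g₀ (closedBall (0:ℂ) (1/2)) :=
    ((hV hg₀V).1.differentiableOn).mono hball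
  have hb : ∀ w ∈ sphere (0:ℂ) (1/2), ‖g w - g₀ w‖ ≤ ε / (2 * 2 ^ k) := by
    intro w hw
    have := hu w hw
    rw [dist_comm, dist_eq_norm] at this
    exact le_of_lt this
  have hbound := coeff_sub_bound hgd hg₀d hb k
  simp only [UniformOnFun.toFun_ofFun] at *
  have h2k : (0:ℝ) < 2 ^ k := by positivity
  calc ‖coeff g k - coeff g₀ k‖ ≤ ε / (2 * 2 ^ k) * 2 ^ k := hbound
    _ = ε / 2 := by field_simp
    _ < ε := by linarith

set_option maxHeartbeats 1000000 in
/-- Main structural lemma: every element of a compact `V` with a nonzero higher coefficient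
can be represented as a dilation of a border element, at the level of coefficients. -/
lemma exists_bor_rep (V : Set (ℂ → ℂ)) (hV : V ⊆ A0)
    (hc : IsCompact ((UniformOnFun.ofFun (S 1)) '' V))
    {f : ℂ → ℂ} (hf : f ∈ V) {k₀ : ℕ} (hk₀1 : 1 ≤ k₀) (hk₀ : coeff f k₀ ≠ 0) :
    ∃ g ∈ bor V, ∃ x : ℂ, ‖x‖ ≤ 1 ∧ ∀ k, coeff f k = x ^ k * coeff g k := by
  classical
  set C : Set (ℂ →ᵤ[S 1] ℂ) := (UniformOnFun.ofFun (S 1)) '' V with hCdef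
  set Φ : ℕ → (ℂ →ᵤ[S 1] ℂ) → ℂ := fun k u => coeff ((UniformOnFun.toFun (S 1)) u) k with hΦdef
  have hΦ : ∀ k, ContinuousOn (Φ k) C := fun k => coeff_continuousOn V hV k
  set K₀ : Set (ℂ × (ℂ →ᵤ[S 1] ℂ)) := (closedBall (0:ℂ) 1) ×ˢ C with hK₀def
  have hK₀ : IsCompact K₀ := (isCompact_closedBall _ _).prod hc
  haveI : CompactSpace ↥K₀ := isCompact_iff_compactSpace.1 hK₀
  have hcont : ∀ k, Continuous (fun q : ↥K₀ => Φ k (q : ℂ × (ℂ →ᵤ[S 1] ℂ)).2) := by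
    intro k
    have h1 : Continuous (fun q : ↥K₀ => ((⟨(q : ℂ × (ℂ →ᵤ[S 1] ℂ)).2, q.2.2⟩ : ↥C))) :=
      Continuous.subtype_mk (continuous_snd.comp continuous_subtype_val) _
    exact (continuousOn_iff_continuous_restrict.1 (hΦ k)).comp h1
  set T : Set ↥K₀ :=
    {q | ∀ k, coeff f k = (q : ℂ × (ℂ →ᵤ[S 1] ℂ)).1 ^ k * Φ k (q : ℂ × (ℂ →ᵤ[S 1] ℂ)).2} with hTdef
  have hTc : IsClosed T := by
    have hT : T = ⋂ k, {q : ↥K₀ |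
        coeff f k = (q : ℂ × (ℂ →ᵤ[S 1] ℂ)).1 ^ k * Φ k (q : ℂ × (ℂ →ᵤ[S 1] ℂ)).2} := by
      ext q; simp [hTdef, Set.mem_iInter]
    rw [hT]
    exact isClosed_iInter fun k => isClosed_eq continuous_const
      (((continuous_fst.comp continuous_subtype_val).pow k).mul (hcont k))
  have hfC : (UniformOnFun.ofFun (S 1)) f ∈ C := mem_image_of_mem _ hf
  have hfK : ((1:ℂ), (UniformOnFun.ofFun (S 1)) f) ∈ K₀ := by
    constructor
    · simp
    · exact hfC
  have hfT : (⟨_, hfK⟩ : ↥K₀) ∈ T := by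
    intro k
    simp [hΦdef]
  obtain ⟨q, hqT, hqmax⟩ := (hTc.isCompact).exists_isMaxOn ⟨_, hfT⟩
    (((continuous_norm.comp (hcont k₀))).continuousOn :
      ContinuousOn (fun q : ↥K₀ => ‖Φ k₀ (q : ℂ × (ℂ →ᵤ[S 1] ℂ)).2‖) T)
  obtain ⟨gs, hgsV, hgu⟩ := q.2.2
  set x : ℂ := (q : ℂ × (ℂ →ᵤ[S 1] ℂ)).1 with hxdef
  have hx : ‖x‖ ≤ 1 := by
    have := q.2.1
    rwa [mem_closedBall_zero_iff] at this
  have hΦgs : ∀ k, Φ k (q : ℂ × (ℂ →ᵤ[S 1] ℂ)).2 = coeff gs k := by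
    intro k
    rw [← hgu]
    simp [hΦdef]
  have hrep : ∀ k, coeff f k = x ^ k * coeff gs k := by
    intro k
    have := hqT k
    rwa [hΦgs k] at this
  have hgs_ne : coeff gs k₀ ≠ 0 := by
    intro h0
    apply hk₀
    rw [hrep k₀, h0, mul_zero]
  refine ⟨gs, ⟨hgsV, Or.inr ?_⟩, x, hx, hrep⟩
  intro g' hg' y hy hEq
  by_contra hy1
  have hylt : ‖y‖ < 1 := lt_of_le_of_ne hy hy1
  have hg'a : AnalyticAt ℂ g' 0 := (hV hg').1 0 (mem_ball_self one_pos)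
  have hcoe : ∀ k, coeff gs k = y ^ k * coeff g' k := by
    intro k
    rw [hEq]
    exact coeff_Pt_s19 hg'a y k
  have hyne : y ≠ 0 := by
    intro h0
    apply hgs_ne
    rw [hcoe k₀, h0, zero_pow (by omega), zero_mul]
  have hg'C : (UniformOnFun.ofFun (S 1)) g' ∈ C := mem_image_of_mem _ hg'
  have hq'K : ((x * y), (UniformOnFun.ofFun (S 1)) g') ∈ K₀ := by
    constructor
    · rw [mem_closedBall_zero_iff, norm_mul]
      calc ‖x‖ * ‖y‖ ≤ 1 * 1 := by
            apply mul_le_mul hx (le_of_lt hylt) (norm_nonneg _) zero_le_one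
        _ = 1 := by ring
    · exact hg'C
  have hq'T : (⟨_, hq'K⟩ : ↥K₀) ∈ T := by
    intro k
    have : Φ k ((UniformOnFun.ofFun (S 1)) g') = coeff g' k := by simp [hΦdef]
    rw [hrep k, hcoe k]
    simp only [this, mul_pow]
    ring
  have hΦg' : Φ k₀ ((UniformOnFun.ofFun (S 1)) g') = coeff g' k₀ := by simp [hΦdef]
  have hle := isMaxOn_iff.1 hqmax _ hq'T
  simp only [Function.comp_apply] at hle
  rw [hΦgs k₀, hΦg'] at hle
  -- hle : ‖coeff g' k₀‖ ≤ ‖coeff gs k₀‖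
  have h1 : ‖coeff gs k₀‖ = ‖y‖ ^ k₀ * ‖coeff g' k₀‖ := by
    rw [hcoe k₀, norm_mul, norm_pow]
  have h2 : ‖y‖ ^ k₀ < 1 := pow_lt_one₀ (norm_nonneg y) hylt (by omega)
  have h3 : 0 < ‖coeff gs k₀‖ := norm_pos_iff.2 hgs_ne
  nlinarith [norm_nonneg (coeff g' k₀), pow_nonneg (norm_nonneg y) k₀]

theorem stmt19 (V : Set (ℂ → ℂ)) (hV : V ⊆ A0)
    (hc : IsCompact ((UniformOnFun.ofFun (S 1)) '' V)) :
    dual (bor V) = dual V := by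
  apply Subset.antisymm
  · rintro h ⟨hhA, hh⟩
    refine ⟨hhA, ?_⟩
    intro f hf z hz
    by_cases hcase : ∀ k, 1 ≤ k → coeff f k = 0
    · have hone : hadamard f h z = 1 := by
        show (∑' k : ℕ, coeff f k * coeff h k * z ^ k) = 1
        rw [tsum_eq_single 0]
        · simp only [pow_zero, mul_one]
          have hf0 : coeff f 0 = 1 := by
            simp [coeff, iteratedDeriv_zero, (hV hf).2]
          have hh0 : coeff h 0 = 1 := by
            simp [coeff, iteratedDeriv_zero, hhA.2]
          rw [hf0, hh0, mul_one]
        · intro k hk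
          rw [hcase k (Nat.one_le_iff_ne_zero.2 hk), zero_mul, zero_mul]
      rw [hone]
      exact one_ne_zero
    · push_neg at hcase
      obtain ⟨k₀, hk₀1, hk₀⟩ := hcase
      obtain ⟨g, hgbor, x, hx, hrep⟩ := exists_bor_rep V hV hc hf hk₀1 hk₀
      have hxz : x * z ∈ ball (0:ℂ) 1 := by
        rw [mem_ball_zero_iff] at hz ⊢
        calc ‖x * z‖ = ‖x‖ * ‖z‖ := norm_mul x z
          _ ≤ 1 * ‖z‖ := mul_le_mul_of_nonneg_right hx (norm_nonneg z)
          _ = ‖z‖ := one_mul _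
          _ < 1 := hz
      have heq : hadamard f h z = hadamard g h (x * z) := by
        show (∑' k : ℕ, coeff f k * coeff h k * z ^ k)
          = ∑' k : ℕ, coeff g k * coeff h k * (x * z) ^ k
        apply tsum_congr
        intro k
        rw [hrep k, mul_pow]
        ring
      rw [heq]
      exact hh g hgbor (x * z) hxz
  · rintro h ⟨hhA, hh⟩
    exact ⟨hhA, fun f hf z hz => hh f hf.1 z hz⟩
end
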